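/- arXiv:2605.20629 — 2 statements merged into one kernel-verified Lean document; each statement's English description precedes it below -/
import Mathlib

section
/- Let A be a finite set with n = |A| ≥ 3 and let a_1, a_2 ∈ A be distinct. For each i ∈ {1,2}, let D_i be a maximal ASPD on A∖{a_i} such that a_{3−i} is a bottom alternative of D_i. Define D_{12} := {ω_{A∖{a_1,a_2}} : ω ∈ D_1, ω(n−1) = a_2} and D_{21} := {ω_{A∖{a_1,a_2}} : ω ∈ D_2, ω(n−1) = a_1}, and suppose D_{12} = D_{21}. Then: (1) for every 3-element subset T ⊆ A∖{a_1,a_2} and every x ∈ T, x is not a bottom alternative of (D_1)_T if and only if x is not a bottom alternative of (D_2)_T; (2) the domain D := {ω ∈ L(A) : ω(n) = a_1 and ω_{A∖{a_1}} ∈ D_1} ∪ {ω ∈ L(A) : ω(n) = a_2 and ω_{A∖{a_2}} ∈ D_2} is a maximal ASPD on A. -/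
variable {α : Type*} [DecidableEq α]

/-- Preferences (linear orders written as lists, most preferred first) on `A`. -/
def PrefOn (A : Finset α) : Set (List α) :=
  {l | l.Nodup ∧ l.toFinset = A}

/-- Restriction of a preference to a subset `T`. -/
def restrictPref (l : List α) (T : Finset α) : List α :=
  l.filter (fun a => decide (a ∈ T))

/-- Arrow's single-peaked domain on `A`: for every triple `T ⊆ A` some `x ∈ T`
is never ranked last in the restriction of the domain to `T`. -/
def IsASPD (A : Finset α) (D : Set (List α)) : Prop :=
  D ⊆ PrefOn A ∧
    ∀ T : Finset α, T ⊆ A → T.card = 3 →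
      ∃ x ∈ T, ∀ l ∈ D, (restrictPref l T).getLast? ≠ some x

/-- Maximal Arrow's single-peaked domain on `A`. -/
def IsMaximalASPD (A : Finset α) (D : Set (List α)) : Prop :=
  IsASPD A D ∧ ∀ l ∈ PrefOn A, l ∉ D → ¬ IsASPD A (insert l D)

/-!
Moving a bottom alternative `b` of a maximal ASPD to the bottom of one of its preferences
gives a preference of the domain again: on every triple it is last where `b` already was last,
or where the original preference was. Hence, for `T` avoiding `a₁, a₂`, every bottom alternative
of `(D₁)_T` is already witnessed by a preference of `D₁` ending in `a₂`, i.e. by `D₁₂`, and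
likewise for `D₂` and `D₂₁`; this gives (1).

For (2), a triple containing `a₁` and `a₂` has its third alternative never ranked last; a triple
containing only `a₁` takes from `D₂` a never-last alternative, which cannot be the bottom
alternative `a₁` of `D₂`; a triple avoiding both is handled by (1). For maximality, a preference
ending in `aᵢ` is excluded by the maximality of `Dᵢ`, and a preference ending in any other `b`
makes each alternative of `{a₁, a₂, b}` last somewhere.
-/

lemma mem_of_mem_prefOn {A : Finset α} {l : List α} (hl : l ∈ PrefOn A) {a : α} (ha : a ∈ l) :
    a ∈ A :=
  hl.2 ▸ List.mem_toFinset.2 ha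

lemma restrictPref_restrictPref (l : List α) {S T : Finset α} (hTS : T ⊆ S) :
    restrictPref (restrictPref l S) T = restrictPref l T := by
  unfold restrictPref
  rw [List.filter_filter]
  refine List.filter_congr fun x _ => ?_
  by_cases hx : x ∈ T <;> simp [hx, hTS _]

lemma getLast?_restrictPref {l : List α} {a : α} (h : l.getLast? = some a) {T : Finset α}
    (ha : a ∈ T) : (restrictPref l T).getLast? = some a := by
  obtain ⟨ys, rfl⟩ := List.getLast?_eq_some_iff.1 h
  simp [restrictPref, List.filter_append, ha]

lemma restrictPref_append_singleton_of_notMem (l : List α) {b : α} {T : Finset α} (hb : b ∉ T) :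
    restrictPref (l ++ [b]) T = restrictPref l T := by
  simp [restrictPref, List.filter_append, hb]

lemma restrictPref_mem_prefOn {A S : Finset α} {l : List α} (hl : l ∈ PrefOn A) (hS : S ⊆ A) :
    restrictPref l S ∈ PrefOn S := by
  refine ⟨hl.1.filter _, ?_⟩
  ext x
  simp only [restrictPref, List.toFinset_filter, hl.2, Finset.mem_filter, decide_eq_true_eq]
  exact ⟨And.right, fun h => ⟨hS h, h⟩⟩

lemma append_singleton_mem_prefOn {A : Finset α} {a : α} (ha : a ∈ A) {m : List α}
    (hm : m ∈ PrefOn (A.erase a)) : m ++ [a] ∈ PrefOn A := by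
  have hna : a ∉ m := fun h => Finset.notMem_erase a A (mem_of_mem_prefOn hm h)
  refine ⟨hm.1.append (List.nodup_singleton a) (List.disjoint_singleton.2 hna), ?_⟩
  rw [List.toFinset_append, hm.2, Finset.union_comm]
  simpa using Finset.insert_erase ha

lemma restrictPref_append_singleton_erase {A : Finset α} {a : α} {m : List α}
    (hm : m ∈ PrefOn (A.erase a)) : restrictPref (m ++ [a]) (A.erase a) = m := by
  rw [restrictPref_append_singleton_of_notMem _ (Finset.notMem_erase a A)]
  exact List.filter_eq_self.2 fun x hx => by simpa using mem_of_mem_prefOn hm hx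

lemma getElem?_card_sub_two {A : Finset α} {a : α} (ha : a ∈ A) {l : List α}
    (hl : l ∈ PrefOn (A.erase a)) : l[A.card - 2]? = l.getLast? := by
  have hlen : l.length = A.card - 1 := by
    rw [← List.toFinset_card_of_nodup hl.1, hl.2, Finset.card_erase_of_mem ha]
  rw [List.getLast?_eq_getElem?, hlen]
  rfl

def IsBottomOn (D : Set (List α)) (T : Finset α) (x : α) : Prop :=
  ∃ l ∈ D, (restrictPref l T).getLast? = some x

lemma isASPD_iff {A : Finset α} {D : Set (List α)} :
    IsASPD A D ↔
      D ⊆ PrefOn A ∧ ∀ T ⊆ A, T.card = 3 → ∃ x ∈ T, ¬ IsBottomOn D T x := by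
  simp [IsASPD, IsBottomOn]

lemma isBottomOn_of_getLast? {D : Set (List α)} {l : List α} (hl : l ∈ D) {a : α}
    (hla : l.getLast? = some a) {T : Finset α} (ha : a ∈ T) : IsBottomOn D T a :=
  ⟨l, hl, getLast?_restrictPref hla ha⟩

lemma IsASPD.mono {A : Finset α} {D D' : Set (List α)} (hD : IsASPD A D) (h : D' ⊆ D) :
    IsASPD A D' :=
  ⟨h.trans hD.1, fun T hT hT3 =>
    (hD.2 T hT hT3).imp fun _ ⟨hxT, hx⟩ => ⟨hxT, fun l hl => hx l (h hl)⟩⟩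

lemma IsASPD.image_restrictPref {A S : Finset α} {D : Set (List α)} (hD : IsASPD A D)
    (hS : S ⊆ A) : IsASPD S ((restrictPref · S) '' D) := by
  refine ⟨?_, fun T hT hT3 => ?_⟩
  · rintro _ ⟨l, hl, rfl⟩
    exact restrictPref_mem_prefOn (hD.1 hl) hS
  · obtain ⟨x, hxT, hx⟩ := hD.2 T (hT.trans hS) hT3
    refine ⟨x, hxT, ?_⟩
    rintro _ ⟨l, hl, rfl⟩
    rw [restrictPref_restrictPref _ hT]
    exact hx l hl

lemma IsASPD.exists_ne_not_isBottomOn {B : Finset α} {D : Set (List α)} (hD : IsASPD B D)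
    {a : α} (ha : ∃ ω ∈ D, ω.getLast? = some a) {T : Finset α} (hT : T ⊆ B)
    (hT3 : T.card = 3) (haT : a ∈ T) : ∃ x ∈ T, x ≠ a ∧ ¬ IsBottomOn D T x := by
  obtain ⟨x, hxT, hx⟩ := (isASPD_iff.1 hD).2 T hT hT3
  obtain ⟨ω, hω, hωa⟩ := ha
  exact ⟨x, hxT, fun hxa => hx (hxa ▸ isBottomOn_of_getLast? hω hωa haT), hx⟩

lemma IsASPD.insert_restrictPref_append_bottom {B : Finset α} {D : Set (List α)}
    (hD : IsASPD B D) {b : α} {ω : List α} (hω : ω ∈ D) (hωb : ω.getLast? = some b)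
    {l : List α} (hl : l ∈ D) : IsASPD B (insert (restrictPref l (B.erase b) ++ [b]) D) := by
  have hbB : b ∈ B := mem_of_mem_prefOn (hD.1 hω) (List.mem_of_getLast? hωb)
  refine ⟨Set.insert_subset (append_singleton_mem_prefOn hbB
    (restrictPref_mem_prefOn (hD.1 hl) (B.erase_subset b))) hD.1, fun T hT hT3 => ?_⟩
  obtain ⟨x, hxT, hx⟩ := hD.2 T hT hT3
  refine ⟨x, hxT, Set.forall_mem_insert.2 ⟨?_, hx⟩⟩
  by_cases hbT : b ∈ T
  · rw [getLast?_restrictPref List.getLast?_concat hbT, ← getLast?_restrictPref hωb hbT]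
    exact hx ω hω
  · rw [restrictPref_append_singleton_of_notMem _ hbT,
      restrictPref_restrictPref _ (Finset.subset_erase.2 ⟨hT, hbT⟩)]
    exact hx l hl

lemma IsMaximalASPD.restrictPref_append_bottom_mem {B : Finset α} {D : Set (List α)}
    (hD : IsMaximalASPD B D) {b : α} {ω : List α} (hω : ω ∈ D) (hωb : ω.getLast? = some b)
    {l : List α} (hl : l ∈ D) : restrictPref l (B.erase b) ++ [b] ∈ D := by
  have hins := hD.1.insert_restrictPref_append_bottom hω hωb hl
  by_contra hnot
  exact hD.2 _ (hins.1 (Set.mem_insert _ _)) hnot hins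

lemma IsMaximalASPD.not_isASPD_insert {A S : Finset α} {Dₛ D : Set (List α)}
    (hDₛ : IsMaximalASPD S Dₛ) (hS : S ⊆ A) (hsub : Dₛ ⊆ (restrictPref · S) '' D)
    {l : List α} (hl : l ∈ PrefOn A) (hlS : restrictPref l S ∉ Dₛ) :
    ¬ IsASPD A (insert l D) := fun h =>
  hDₛ.2 _ (restrictPref_mem_prefOn hl hS) hlS <| (h.image_restrictPref hS).mono <| by
    rw [Set.image_insert_eq]
    exact Set.insert_subset_insert hsub

lemma IsMaximalASPD.isBottomOn_iff {A : Finset α} {a b : α} (ha : a ∈ A) {D : Set (List α)}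
    (hD : IsMaximalASPD (A.erase a) D) (hb : ∃ ω ∈ D, ω.getLast? = some b)
    {S T : Finset α} (hTS : T ⊆ S) (hT : T ⊆ (A.erase a).erase b) {x : α} :
    IsBottomOn D T x ↔
      IsBottomOn {m | ∃ l ∈ D, l[A.card - 2]? = some b ∧ m = restrictPref l S} T x := by
  constructor
  · rintro ⟨l, hl, hlx⟩
    obtain ⟨ω, hω, hωb⟩ := hb
    have hmem := hD.restrictPref_append_bottom_mem hω hωb hl
    refine ⟨_, ⟨_, hmem, ?_, rfl⟩, ?_⟩
    · rw [getElem?_card_sub_two ha (hD.1.1 hmem)]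
      exact List.getLast?_concat
    · rwa [restrictPref_restrictPref _ hTS, restrictPref_append_singleton_of_notMem _
        (fun hbT => Finset.notMem_erase b _ (hT hbT)), restrictPref_restrictPref _ hT]
  · rintro ⟨_, ⟨l, hl, -, rfl⟩, hlx⟩
    exact ⟨l, hl, by rwa [restrictPref_restrictPref _ hTS] at hlx⟩

section Merge

variable {A : Finset α} {a₁ a₂ : α} {D₁ D₂ : Set (List α)}

def mergedDomain (A : Finset α) (a₁ a₂ : α) (D₁ D₂ : Set (List α)) : Set (List α) :=
  {l | l ∈ PrefOn A ∧
    ((l.getLast? = some a₁ ∧ restrictPref l (A.erase a₁) ∈ D₁) ∨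
      (l.getLast? = some a₂ ∧ restrictPref l (A.erase a₂) ∈ D₂))}

lemma mergedDomain_comm : mergedDomain A a₁ a₂ D₁ D₂ = mergedDomain A a₂ a₁ D₂ D₁ := by
  ext l
  exact and_congr_right' or_comm

lemma append_singleton_mem_mergedDomain (ha₁ : a₁ ∈ A) (hD₁ : D₁ ⊆ PrefOn (A.erase a₁))
    {m : List α} (hm : m ∈ D₁) : m ++ [a₁] ∈ mergedDomain A a₁ a₂ D₁ D₂ :=
  ⟨append_singleton_mem_prefOn ha₁ (hD₁ hm),
    Or.inl ⟨List.getLast?_concat, by rwa [restrictPref_append_singleton_erase (hD₁ hm)]⟩⟩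

lemma IsBottomOn.of_mergedDomain {T : Finset α} (hT : T ⊆ A) {x : α}
    (hx : IsBottomOn (mergedDomain A a₁ a₂ D₁ D₂) T x) :
    (a₁ ∈ T ∧ x = a₁) ∨ (a₂ ∈ T ∧ x = a₂) ∨
      (a₁ ∉ T ∧ IsBottomOn D₁ T x) ∨ (a₂ ∉ T ∧ IsBottomOn D₂ T x) := by
  obtain ⟨l, ⟨-, ⟨hlast, hl₁⟩ | ⟨hlast, hl₂⟩⟩, hlx⟩ := hx
  · by_cases h₁ : a₁ ∈ T
    · rw [getLast?_restrictPref hlast h₁] at hlx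
      exact .inl ⟨h₁, (Option.some_inj.1 hlx).symm⟩
    · rw [← restrictPref_restrictPref l (Finset.subset_erase.2 ⟨hT, h₁⟩)] at hlx
      exact .inr (.inr (.inl ⟨h₁, _, hl₁, hlx⟩))
  · by_cases h₂ : a₂ ∈ T
    · rw [getLast?_restrictPref hlast h₂] at hlx
      exact .inr (.inl ⟨h₂, (Option.some_inj.1 hlx).symm⟩)
    · rw [← restrictPref_restrictPref l (Finset.subset_erase.2 ⟨hT, h₂⟩)] at hlx
      exact .inr (.inr (.inr ⟨h₂, _, hl₂, hlx⟩))

lemma isASPD_mergedDomain (hD₁ : IsASPD (A.erase a₁) D₁) (hD₂ : IsASPD (A.erase a₂) D₂)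
    (hb₁ : ∃ l ∈ D₁, l.getLast? = some a₂) (hb₂ : ∃ l ∈ D₂, l.getLast? = some a₁)
    (hagree : ∀ T ⊆ A \ {a₁, a₂}, ∀ x, IsBottomOn D₂ T x → IsBottomOn D₁ T x) :
    IsASPD A (mergedDomain A a₁ a₂ D₁ D₂) := by
  refine isASPD_iff.2 ⟨fun _ hl => hl.1, fun T hT hT3 => ?_⟩
  by_cases h₁ : a₁ ∈ T <;> by_cases h₂ : a₂ ∈ T
  · obtain ⟨c, hcT, hc⟩ := Finset.exists_mem_notMem_of_card_lt_card
      (Finset.card_le_two.trans_lt (hT3 ▸ by norm_num) : ({a₁, a₂} : Finset α).card < T.card)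
    simp only [Finset.mem_insert, Finset.mem_singleton, not_or] at hc
    refine ⟨c, hcT, fun hbot => ?_⟩
    rcases hbot.of_mergedDomain hT with ⟨-, rfl⟩ | ⟨-, rfl⟩ | ⟨h, -⟩ | ⟨h, -⟩ <;> simp_all
  · obtain ⟨x, hxT, hxa, hx⟩ := hD₂.exists_ne_not_isBottomOn hb₂
      (Finset.subset_erase.2 ⟨hT, h₂⟩) hT3 h₁
    refine ⟨x, hxT, fun hbot => ?_⟩
    rcases hbot.of_mergedDomain hT with ⟨-, h⟩ | ⟨h, -⟩ | ⟨h, -⟩ | ⟨-, h⟩ <;> simp_all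
  · obtain ⟨x, hxT, hxa, hx⟩ := hD₁.exists_ne_not_isBottomOn hb₁
      (Finset.subset_erase.2 ⟨hT, h₁⟩) hT3 h₂
    refine ⟨x, hxT, fun hbot => ?_⟩
    rcases hbot.of_mergedDomain hT with ⟨h, -⟩ | ⟨-, h⟩ | ⟨-, h⟩ | ⟨h, -⟩ <;> simp_all
  · obtain ⟨x, hxT, hx⟩ := (isASPD_iff.1 hD₁).2 T (Finset.subset_erase.2 ⟨hT, h₁⟩) hT3
    have hTs : T ⊆ A \ {a₁, a₂} := Finset.subset_sdiff.2 ⟨hT, by simp [h₁, h₂]⟩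
    refine ⟨x, hxT, fun hbot => ?_⟩
    rcases hbot.of_mergedDomain hT with ⟨h, -⟩ | ⟨h, -⟩ | ⟨-, h⟩ | ⟨-, h⟩
    exacts [h₁ h, h₂ h, hx h, hx (hagree T hTs x h)]

lemma not_isASPD_insert_mergedDomain_of_getLast? (hD₁ : IsMaximalASPD (A.erase a₁) D₁)
    (ha₁ : a₁ ∈ A) {l : List α} (hl : l ∈ PrefOn A) (hla : l.getLast? = some a₁)
    (hlD : l ∉ mergedDomain A a₁ a₂ D₁ D₂) :
    ¬ IsASPD A (insert l (mergedDomain A a₁ a₂ D₁ D₂)) :=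
  hD₁.not_isASPD_insert (A.erase_subset a₁)
    (fun m hm => ⟨m ++ [a₁], append_singleton_mem_mergedDomain ha₁ hD₁.1.1 hm,
      restrictPref_append_singleton_erase (hD₁.1.1 hm)⟩)
    hl fun hmem => hlD ⟨hl, .inl ⟨hla, hmem⟩⟩

lemma isMaximalASPD_mergedDomain (ha₁ : a₁ ∈ A) (ha₂ : a₂ ∈ A) (hne : a₁ ≠ a₂)
    (hD₁ : IsMaximalASPD (A.erase a₁) D₁) (hD₂ : IsMaximalASPD (A.erase a₂) D₂)
    (hb₁ : ∃ l ∈ D₁, l.getLast? = some a₂) (hb₂ : ∃ l ∈ D₂, l.getLast? = some a₁)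
    (hagree : ∀ T ⊆ A \ {a₁, a₂}, ∀ x, IsBottomOn D₂ T x → IsBottomOn D₁ T x) :
    IsMaximalASPD A (mergedDomain A a₁ a₂ D₁ D₂) := by
  refine ⟨isASPD_mergedDomain hD₁.1 hD₂.1 hb₁ hb₂ hagree, fun l hl hlD => ?_⟩
  have hne_nil : l ≠ [] := List.ne_nil_of_mem (List.mem_toFinset.1 (hl.2 ▸ ha₁))
  set b := l.getLast hne_nil
  have hlb : l.getLast? = some b := List.getLast?_eq_some_getLast hne_nil
  by_cases hb₁' : b = a₁
  · exact not_isASPD_insert_mergedDomain_of_getLast? hD₁ ha₁ hl (hb₁' ▸ hlb) hlD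
  by_cases hb₂' : b = a₂
  · rw [mergedDomain_comm] at hlD ⊢
    exact not_isASPD_insert_mergedDomain_of_getLast? hD₂ ha₂ hl (hb₂' ▸ hlb) hlD
  have hbA : b ∈ A := mem_of_mem_prefOn hl (List.getLast_mem hne_nil)
  obtain ⟨ω₁, hω₁, -⟩ := hb₁
  obtain ⟨ω₂, hω₂, -⟩ := hb₂
  intro hins
  obtain ⟨x, hxT, hx⟩ := (isASPD_iff.1 hins).2 {a₁, a₂, b}
    (by simp [Finset.insert_subset_iff, ha₁, ha₂, hbA])
    (Finset.card_eq_three.2 ⟨a₁, a₂, b, hne, Ne.symm hb₁', Ne.symm hb₂', rfl⟩)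
  simp only [Finset.mem_insert, Finset.mem_singleton] at hxT
  rcases hxT with rfl | rfl | rfl
  · exact hx (isBottomOn_of_getLast? (Set.mem_insert_of_mem _
      (append_singleton_mem_mergedDomain ha₁ hD₁.1.1 hω₁)) List.getLast?_concat (by simp))
  · rw [mergedDomain_comm] at hx
    exact hx (isBottomOn_of_getLast? (Set.mem_insert_of_mem _
      (append_singleton_mem_mergedDomain ha₂ hD₂.1.1 hω₂)) List.getLast?_concat (by simp))
  · exact hx (isBottomOn_of_getLast? (Set.mem_insert _ _) hlb (by simp))

end Merge

theorem maximal_aspd_merging_general (A : Finset α) (a₁ a₂ : α)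
    (ha₁ : a₁ ∈ A) (ha₂ : a₂ ∈ A) (hne : a₁ ≠ a₂)
    (D₁ D₂ : Set (List α))
    (hD₁ : IsMaximalASPD (A.erase a₁) D₁) (hD₂ : IsMaximalASPD (A.erase a₂) D₂)
    (hb₁ : ∃ l ∈ D₁, l.getLast? = some a₂) (hb₂ : ∃ l ∈ D₂, l.getLast? = some a₁)
    (hmerge :
      {m | ∃ l ∈ D₁, l[A.card - 2]? = some a₂ ∧ m = restrictPref l (A \ {a₁, a₂})} =
      {m | ∃ l ∈ D₂, l[A.card - 2]? = some a₁ ∧ m = restrictPref l (A \ {a₁, a₂})}) :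
    (∀ T : Finset α, T ⊆ A \ {a₁, a₂} → T.card = 3 → ∀ x ∈ T,
      ((¬ ∃ l ∈ D₁, (restrictPref l T).getLast? = some x) ↔
        (¬ ∃ l ∈ D₂, (restrictPref l T).getLast? = some x))) ∧
    IsMaximalASPD A
      {l | l ∈ PrefOn A ∧
        ((l.getLast? = some a₁ ∧ restrictPref l (A.erase a₁) ∈ D₁) ∨
          (l.getLast? = some a₂ ∧ restrictPref l (A.erase a₂) ∈ D₂))} := by
  have hagree : ∀ T ⊆ A \ {a₁, a₂}, ∀ x, IsBottomOn D₁ T x ↔ IsBottomOn D₂ T x := by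
    intro T hT x
    have hT₂₁ : T ⊆ (A.erase a₂).erase a₁ := by
      rwa [Finset.sdiff_insert, Finset.sdiff_singleton_eq_erase] at hT
    rw [hD₁.isBottomOn_iff ha₁ hb₁ hT (by rwa [Finset.erase_right_comm]), hmerge,
      ← hD₂.isBottomOn_iff ha₂ hb₂ hT hT₂₁]
  exact ⟨fun T hT _ x _ => not_congr (hagree T hT x),
    isMaximalASPD_mergedDomain ha₁ ha₂ hne hD₁ hD₂ hb₁ hb₂ fun T hT x => (hagree T hT x).2⟩

/-- Merging maximal Arrow's single-peaked domains: if `D₁`, `D₂` are maximal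
ASPDs on `A ∖ {a₁}`, `A ∖ {a₂}`, each having the other deleted alternative as a
bottom alternative, and `D₁₂ = D₂₁`, then (1) for every triple
`T ⊆ A ∖ {a₁, a₂}` and `x ∈ T`, `x` is not bottom in `(D₁)_T` iff `x` is not
bottom in `(D₂)_T`, and (2) the merged domain is a maximal ASPD on `A`. -/
theorem maximal_aspd_merging (A : Finset α) (hA : 3 ≤ A.card) (a₁ a₂ : α)
    (ha₁ : a₁ ∈ A) (ha₂ : a₂ ∈ A) (hne : a₁ ≠ a₂)
    (D₁ D₂ : Set (List α))
    (hD₁ : IsMaximalASPD (A.erase a₁) D₁) (hD₂ : IsMaximalASPD (A.erase a₂) D₂)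
    (hb₁ : ∃ l ∈ D₁, l.getLast? = some a₂) (hb₂ : ∃ l ∈ D₂, l.getLast? = some a₁)
    (hmerge :
      {m | ∃ l ∈ D₁, l[A.card - 2]? = some a₂ ∧ m = restrictPref l (A \ {a₁, a₂})} =
      {m | ∃ l ∈ D₂, l[A.card - 2]? = some a₁ ∧ m = restrictPref l (A \ {a₁, a₂})}) :
    (∀ T : Finset α, T ⊆ A \ {a₁, a₂} → T.card = 3 → ∀ x ∈ T,
      ((¬ ∃ l ∈ D₁, (restrictPref l T).getLast? = some x) ↔
        (¬ ∃ l ∈ D₂, (restrictPref l T).getLast? = some x))) ∧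
    IsMaximalASPD A
      {l | l ∈ PrefOn A ∧
        ((l.getLast? = some a₁ ∧ restrictPref l (A.erase a₁) ∈ D₁) ∨
          (l.getLast? = some a₂ ∧ restrictPref l (A.erase a₂) ∈ D₂))} :=
  maximal_aspd_merging_general A a₁ a₂ ha₁ ha₂ hne D₁ D₂ hD₁ hD₂ hb₁ hb₂ hmerge
end

section
/- Let D be a maximal ASPD on a finite set A with n = |A| and let V := {{ω(1),…,ω(k)} : ω ∈ D, 1 ≤ k ≤ n} be the regular vine corresponding to D. Then for each a ∈ A, the number of preferences ω ∈ D with ω(1) = a equals the number of maximal chains of the poset V whose minimal element is {a}. -/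
variable {α : Type*} [DecidableEq α]

/-- `T` is covered by `S` in the family `V`, ordered by inclusion. -/
def CoversIn (V : Set (Finset α)) (T S : Finset α) : Prop :=
  T ∈ V ∧ S ∈ V ∧ T ⊂ S ∧ ∀ U ∈ V, T ⊂ U → U ⊂ S → False

/-- `S` is a minimal element of the family `V`, ordered by inclusion. -/
def MinimalIn (V : Set (Finset α)) (S : Finset α) : Prop :=
  S ∈ V ∧ ∀ T ∈ V, T ⊆ S → T = S

/-- `C` is a maximal chain of the family `V`, ordered by inclusion. -/
def IsMaxChainIn (V C : Set (Finset α)) : Prop :=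
  C ⊆ V ∧ IsChain (· ⊆ ·) C ∧ ∀ S ∈ V, IsChain (· ⊆ ·) (insert S C) → S ∈ C

/-- The `i`-th associated graph of a family `V`: vertices are the elements of `V`
of cardinality `i`, and each element of `V` of cardinality `i+1` is an edge
joining the two elements it covers. -/
def vineGraph (V : Set (Finset α)) (i : ℕ) :
    SimpleGraph {S : Finset α // S ∈ V ∧ S.card = i} where
  Adj S T := S ≠ T ∧ ∃ W ∈ V, W.card = i + 1 ∧ CoversIn V S.1 W ∧ CoversIn V T.1 W
  symm := by
    constructor
    rintro S T ⟨h, W, hW, hc, h1, h2⟩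
    exact ⟨h.symm, W, hW, hc, h2, h1⟩
  loopless := by
    constructor
    rintro S ⟨h, -⟩
    exact h rfl

/-- A regular vine on a finite set `A` (poset definition): a family of nonempty
subsets of `A` such that (1) all maximal chains have length `|A| - 1` and all
minimal elements are singletons, (2) there are exactly `|A|` minimal elements,
(3) every non-minimal element covers exactly two elements, (4) each associated
graph is a tree, and (5) proximity holds. -/
def IsRegularVine (A : Finset α) (V : Set (Finset α)) : Prop :=
  (∀ S ∈ V, S ⊆ A ∧ S.Nonempty) ∧
  (∀ C : Set (Finset α), IsMaxChainIn V C → C.ncard = A.card) ∧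
  (∀ S, MinimalIn V S → S.card = 1) ∧
  {S | MinimalIn V S}.ncard = A.card ∧
  (∀ S ∈ V, (∃ T ∈ V, T ⊂ S) → {T | CoversIn V T S}.ncard = 2) ∧
  (∀ i : ℕ, 1 ≤ i → i ≤ A.card - 1 → (vineGraph V i).IsTree) ∧
  (∀ S ∈ V, ∀ T ∈ V, S ≠ T → S.card = T.card → 2 ≤ S.card →
    (∃ W, CoversIn V S W ∧ CoversIn V T W) → ∃ U, CoversIn V U S ∧ CoversIn V U T)

/-- The family of initial segments of the preferences of a domain: the regular
vine corresponding to a maximal Arrow's single-peaked domain. -/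
def prefixFamily (D : Set (List α)) : Set (Finset α) :=
  {S | ∃ l ∈ D, ∃ k : ℕ, 1 ≤ k ∧ k ≤ l.length ∧ S = (l.take k).toFinset}

/-!
A preference `l ∈ D` is recovered from its chain of initial segments, and for a maximal domain
every maximal chain of the vine arises this way. The key point is that a maximal domain is
closed under merging: if `T` is the set of the first `t` alternatives of `l' ∈ D`, then ranking
`T` as `l ∈ D` does and the rest as `l'` does gives again a preference of `D`, because on each
triple it has the same last alternative as `l` or as `l'`. Given a maximal chain `C` and
`p ∈ D` whose first `k` initial segments lie in `C`, merging `p` with a preference realising the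
least element `T` of `C` above them produces a preference whose first `k + 1` initial segments
lie in `C`: the new one sits between the `k`-th one and `T`, so maximality of `C` forces it in.
-/

namespace List

theorem card_toFinset_take {l : List α} (hl : l.Nodup) {k : ℕ} (hk : k ≤ l.length) :
    (l.take k).toFinset.card = k := by
  rw [toFinset_card_of_nodup (hl.sublist (take_sublist k l)), length_take]
  omega

theorem toFinset_take_mono (l : List α) {j k : ℕ} (h : j ≤ k) :
    (l.take j).toFinset ⊆ (l.take k).toFinset := fun _ hx =>
  mem_toFinset.2 (take_subset_take_left l h (mem_toFinset.1 hx))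

theorem eq_of_forall_toFinset_take_eq {l l' : List α} (hl : l.Nodup) (hl' : l'.Nodup)
    (h : ∀ k, (l.take k).toFinset = (l'.take k).toFinset) : l = l' := by
  induction l generalizing l' with
  | nil =>
    cases l' with
    | nil => rfl
    | cons y t' => simpa using h 1
  | cons x t ih =>
    cases l' with
    | nil => simpa using h 1
    | cons y t' =>
      obtain rfl : x = y := by simpa using h 1
      rw [nodup_cons] at hl hl'
      refine congrArg _ (ih hl.2 hl'.2 fun k => ?_)
      have hk := congrArg (·.erase x) (h (k + 1))
      have hxt : x ∉ (t.take k).toFinset := fun hx => hl.1 (mem_of_mem_take (mem_toFinset.1 hx))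
      have hxt' : x ∉ (t'.take k).toFinset :=
        fun hx => hl'.1 (mem_of_mem_take (mem_toFinset.1 hx))
      simpa only [take_succ_cons, toFinset_cons, Finset.erase_insert hxt,
        Finset.erase_insert hxt'] using hk

end List

open List

theorem restrictPref_append (l₁ l₂ : List α) (T : Finset α) :
    restrictPref (l₁ ++ l₂) T = restrictPref l₁ T ++ restrictPref l₂ T :=
  filter_append ..

theorem mem_restrictPref {l : List α} {T : Finset α} {x : α} :
    x ∈ restrictPref l T ↔ x ∈ l ∧ x ∈ T := by
  simp [restrictPref]

theorem restrictPref_eq_self {l : List α} {T : Finset α} (h : ∀ x ∈ l, x ∈ T) :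
    restrictPref l T = l :=
  filter_eq_self.2 fun x hx => decide_eq_true (h x hx)

theorem restrictPref_eq_nil {l : List α} {T : Finset α} (h : ∀ x ∈ l, x ∉ T) :
    restrictPref l T = [] :=
  filter_eq_nil_iff.2 fun x hx => by simpa using h x hx

theorem restrictPref_restrictPref_of_subset (l : List α) {X T : Finset α} (h : X ⊆ T) :
    restrictPref (restrictPref l T) X = restrictPref l X := by
  simp only [restrictPref, filter_filter]
  refine filter_congr fun x _ => ?_
  by_cases hx : x ∈ X
  · simp [hx, h hx]
  · simp [hx]

theorem restrictPref_eq_take_append {l : List α} {T : Finset α} {k : ℕ}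
    (h : (l.take k).toFinset ⊆ T) :
    restrictPref l T = l.take k ++ restrictPref (l.drop k) T := by
  conv_lhs => rw [← take_append_drop k l]
  rw [restrictPref_append, restrictPref_eq_self fun x hx => h (mem_toFinset.2 hx)]

theorem length_restrictPref {l : List α} (hl : l.Nodup) {T : Finset α}
    (hT : T ⊆ l.toFinset) : (restrictPref l T).length = T.card := by
  rw [restrictPref, ← toFinset_card_of_nodup (hl.filter _)]
  congr 1
  ext x
  simpa [mem_restrictPref] using fun hx => mem_toFinset.1 (hT hx)

theorem take_restrictPref_append {l : List α} {T : Finset α} {k : ℕ} (hk : k ≤ l.length)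
    (h : (l.take k).toFinset ⊆ T) (r : List α) :
    (restrictPref l T ++ r).take k = l.take k := by
  rw [restrictPref_eq_take_append h, append_assoc, take_left' (length_take_of_le hk)]

theorem toFinset_take_restrictPref_append {l : List α} (hl : l.Nodup) {T : Finset α}
    (hT : T ⊆ l.toFinset) (r : List α) :
    ((restrictPref l T ++ r).take T.card).toFinset = T := by
  rw [take_left' (length_restrictPref hl hT)]
  ext x
  simpa [mem_restrictPref] using fun hx => mem_toFinset.1 (hT hx)

theorem length_eq_card_of_mem_prefOn {A : Finset α} {l : List α} (hl : l ∈ PrefOn A) :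
    l.length = A.card := by
  rw [← hl.2, toFinset_card_of_nodup hl.1]

theorem mem_prefOn_of_perm {A : Finset α} {l l' : List α} (hl : l ∈ PrefOn A) (h : l' ~ l) :
    l' ∈ PrefOn A :=
  ⟨h.nodup_iff.2 hl.1, (toFinset_eq_of_perm _ _ h).trans hl.2⟩

theorem IsMaxChainIn.mem_of_forall_comparable {β : Type*} {V C : Set (Finset β)}
    (hC : IsMaxChainIn V C) {U : Finset β} (hU : U ∈ V) (h : ∀ Y ∈ C, Y ⊆ U ∨ U ⊆ Y) :
    U ∈ C :=
  hC.2.2 U hU (hC.2.1.insert fun Y hY _ => (h Y hY).symm)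

theorem IsMaxChainIn.eq_of_subset {β : Type*} {V C C' : Set (Finset β)} (hC : IsMaxChainIn V C)
    (hC'V : C' ⊆ V) (hC' : IsChain (· ⊆ ·) C') (h : C ⊆ C') : C = C' :=
  h.antisymm fun S hS => hC.2.2 S (hC'V hS) (hC'.mono (Set.insert_subset hS h))

theorem IsChain.exists_min_not_subset {β : Type*} {C : Set (Finset β)}
    (hC : IsChain (· ⊆ ·) C) (hfin : C.Finite) {P : Finset β}
    (hP : ∀ Y ∈ C, Y ⊆ P ∨ P ⊆ Y) (hex : ∃ X ∈ C, ¬X ⊆ P) :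
    ∃ T ∈ C, P ⊂ T ∧ ∀ Y ∈ C, Y ⊆ P ∨ T ⊆ Y := by
  obtain ⟨T, ⟨hTC, hTP⟩, hTmin⟩ :=
    Set.exists_min_image {X | X ∈ C ∧ ¬X ⊆ P} Finset.card (hfin.subset fun _ => And.left) hex
  refine ⟨T, hTC, ((hP T hTC).resolve_left hTP).ssubset_of_not_subset hTP, fun Y hY => ?_⟩
  refine or_iff_not_imp_left.2 fun hYP => ?_
  rcases hC.total hTC hY with hTY | hYT
  · exact hTY
  · exact (Finset.eq_of_subset_of_card_le hYT (hTmin Y ⟨hY, hYP⟩)).ge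

def prefixSets (l : List α) : Set (Finset α) :=
  {S | ∃ k : ℕ, 1 ≤ k ∧ k ≤ l.length ∧ S = (l.take k).toFinset}

theorem singleton_mem_prefixSets_iff {l : List α} {a : α} :
    {a} ∈ prefixSets l ↔ l.head? = some a := by
  cases l with
  | nil => simp [prefixSets]
  | cons x t =>
    refine ⟨fun ⟨k, hk1, _, hk⟩ => ?_,
      fun h => ⟨1, le_rfl, by simp, by simpa using h.symm⟩⟩
    obtain ⟨k, rfl⟩ : ∃ k', k = k' + 1 := ⟨k - 1, by omega⟩
    rw [Finset.ext_iff] at hk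
    simpa using (hk x).2 (by simp [take_succ_cons])

theorem mem_of_mem_prefixSets {l : List α} {a : α} (h : l.head? = some a) {S : Finset α}
    (hS : S ∈ prefixSets l) : a ∈ S := by
  obtain ⟨k, hk1, _, rfl⟩ := hS
  obtain ⟨k, rfl⟩ : ∃ k', k = k' + 1 := ⟨k - 1, by omega⟩
  cases l with
  | nil => simp at h
  | cons x t => simp_all [take_succ_cons]

theorem isChain_prefixSets (l : List α) : IsChain (· ⊆ ·) (prefixSets l) := by
  rintro _ ⟨j, -, -, rfl⟩ _ ⟨k, -, -, rfl⟩ -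
  exact (le_total j k).imp (toFinset_take_mono l) (toFinset_take_mono l)

theorem prefixSets_injOn (A : Finset α) : Set.InjOn prefixSets (PrefOn A) := by
  intro l hl l' hl' h
  refine eq_of_forall_toFinset_take_eq hl.1 hl'.1 fun k => ?_
  rcases Nat.eq_zero_or_pos k with rfl | hk1
  · simp
  by_cases hkn : k ≤ A.card
  · have hkl := (length_eq_card_of_mem_prefOn hl).ge.trans' hkn
    obtain ⟨j, -, hjl, hj⟩ : (l.take k).toFinset ∈ prefixSets l' :=
      h ▸ ⟨k, hk1, hkl, rfl⟩
    have hjk : j = k := by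
      rw [← card_toFinset_take hl'.1 hjl, ← hj, card_toFinset_take hl.1 hkl]
    rw [hj, hjk]
  · rw [take_of_length_le (by rw [length_eq_card_of_mem_prefOn hl]; omega),
      take_of_length_le (by rw [length_eq_card_of_mem_prefOn hl']; omega), hl.2, hl'.2]

section Domain

variable {A : Finset α} {D : Set (List α)}

theorem subset_of_mem_prefixFamily (hD : D ⊆ PrefOn A) {S : Finset α}
    (hS : S ∈ prefixFamily D) : S ⊆ A := by
  obtain ⟨l, hl, k, -, -, rfl⟩ := hS
  exact fun x hx => (hD hl).2 ▸ mem_toFinset.2 (mem_of_mem_take (mem_toFinset.1 hx))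

theorem prefixFamily_finite (hD : D ⊆ PrefOn A) : (prefixFamily D).Finite :=
  A.powerset.finite_toSet.subset fun _ hS =>
    Finset.mem_coe.2 (Finset.mem_powerset.2 (subset_of_mem_prefixFamily hD hS))

theorem isMaxChainIn_prefixSets (hD : D ⊆ PrefOn A) {l : List α} (hl : l ∈ D) :
    IsMaxChainIn (prefixFamily D) (prefixSets l) := by
  refine ⟨fun S hS => ⟨l, hl, hS⟩, isChain_prefixSets l, fun S hS hchain => ?_⟩
  obtain ⟨q, hq, k, hk1, hkq, rfl⟩ := hS
  have hkl : k ≤ l.length := by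
    rwa [length_eq_card_of_mem_prefOn (hD hq), ← length_eq_card_of_mem_prefOn (hD hl)] at hkq
  have hmem : (l.take k).toFinset ∈ prefixSets l := ⟨k, hk1, hkl, rfl⟩
  have hcard : (q.take k).toFinset.card = (l.take k).toFinset.card := by
    rw [card_toFinset_take (hD hq).1 hkq, card_toFinset_take (hD hl).1 hkl]
  by_cases heq : (q.take k).toFinset = (l.take k).toFinset
  · exact heq ▸ hmem
  rcases hchain (Set.mem_insert _ _) (Set.mem_insert_of_mem _ hmem) heq with h | h
  · exact (Finset.eq_of_subset_of_card_le h hcard.ge) ▸ hmem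
  · exact (Finset.eq_of_subset_of_card_le h hcard.le).symm ▸ hmem

theorem ground_mem_of_isMaxChainIn_prefixFamily (hD : D ⊆ PrefOn A) {C : Set (Finset α)}
    (hC : IsMaxChainIn (prefixFamily D) C) {p : List α} (hp : p ∈ D) (hA : 0 < A.card) :
    A ∈ C := by
  have hpA := length_eq_card_of_mem_prefOn (hD hp)
  refine hC.mem_of_forall_comparable ⟨p, hp, A.card, hA, hpA.ge, ?_⟩
    fun Y hY => Or.inl (subset_of_mem_prefixFamily hD (hC.1 hY))
  rw [← hpA, take_length, (hD hp).2]

theorem IsMaximalASPD.mem_of_forall_getLast?_eq (hD : IsMaximalASPD A D) {l : List α}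
    (hl : l ∈ PrefOn A)
    (h : ∀ X ⊆ A, X.card = 3 →
      ∃ p ∈ D, (restrictPref l X).getLast? = (restrictPref p X).getLast?) :
    l ∈ D := by
  by_contra hlD
  refine hD.2 l hl hlD ⟨Set.insert_subset hl hD.1.1, fun X hXA hX3 => ?_⟩
  obtain ⟨x, hxX, hx⟩ := hD.1.2 X hXA hX3
  obtain ⟨p, hp, hlp⟩ := h X hXA hX3
  refine ⟨x, hxX, ?_⟩
  rintro q (rfl | hq)
  · exact hlp ▸ hx p hp
  · exact hx q hq

theorem IsMaximalASPD.restrictPref_append_drop_mem (hD : IsMaximalASPD A D) {l l' : List α}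
    (hl : l ∈ D) (hl' : l' ∈ D) (t : ℕ) :
    restrictPref l (l'.take t).toFinset ++ l'.drop t ∈ D := by
  set T := (l'.take t).toFinset
  have hlP := hD.1.1 hl
  have hl'P := hD.1.1 hl'
  have hmem : ∀ {x}, x ∈ l ↔ x ∈ l' := by
    intro x; rw [← mem_toFinset, hlP.2, ← hl'P.2, mem_toFinset]
  have hdisj : ∀ x ∈ l'.drop t, x ∉ T := fun x hx hxT =>
    disjoint_take_drop hl'P.1 le_rfl (mem_toFinset.1 hxT) hx
  have hperm : restrictPref l T ~ l'.take t := by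
    refine (perm_ext_iff_of_nodup (hlP.1.filter _) (hl'P.1.sublist (take_sublist t l'))).2
      fun x => ?_
    show x ∈ restrictPref l T ↔ _
    rw [mem_restrictPref, hmem, mem_toFinset]
    exact ⟨And.right, fun hx => ⟨mem_of_mem_take hx, hx⟩⟩
  refine hD.mem_of_forall_getLast?_eq
    (mem_prefOn_of_perm hl'P ((hperm.append_right _).trans (Perm.of_eq (take_append_drop t l'))))
    fun X hXA _ => ?_
  by_cases hXT : X ⊆ T
  · refine ⟨l, hl, ?_⟩
    rw [restrictPref_append, restrictPref_restrictPref_of_subset l hXT,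
      restrictPref_eq_nil fun x hx hxX => hdisj x hx (hXT hxX), append_nil]
  · obtain ⟨w, hwX, hwT⟩ := Finset.not_subset.1 hXT
    have hw : w ∈ l' := mem_toFinset.1 (hl'P.2 ▸ hXA hwX)
    rw [← take_append_drop t l', mem_append] at hw
    have hne : restrictPref (l'.drop t) X ≠ [] :=
      ne_nil_of_mem (mem_restrictPref.2 ⟨hw.resolve_left (hwT ∘ mem_toFinset.2), hwX⟩)
    refine ⟨l', hl', ?_⟩
    conv_rhs => rw [← take_append_drop t l']
    rw [restrictPref_append, restrictPref_append, getLast?_append_of_ne_nil _ hne,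
      getLast?_append_of_ne_nil _ hne]

theorem IsMaximalASPD.exists_prefixes_mem_succ (hD : IsMaximalASPD A D) {C : Set (Finset α)}
    (hC : IsMaxChainIn (prefixFamily D) C) {p : List α} (hp : p ∈ D) {k : ℕ} (hk : k < A.card)
    (hpC : ∀ j, 1 ≤ j → j ≤ k → (p.take j).toFinset ∈ C) :
    ∃ m ∈ D, ∀ j, 1 ≤ j → j ≤ k + 1 → (m.take j).toFinset ∈ C := by
  have hpP := hD.1.1 hp
  have hpA := length_eq_card_of_mem_prefOn hpP
  set P := (p.take k).toFinset
  have hAC : A ∈ C := ground_mem_of_isMaxChainIn_prefixFamily hD.1.1 hC hp (by omega)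
  have hAP : ¬A ⊆ P := fun h => by
    have := Finset.card_le_card h
    rw [card_toFinset_take hpP.1 (by omega)] at this
    omega
  have hPcomp : ∀ Y ∈ C, Y ⊆ P ∨ P ⊆ Y := by
    rcases Nat.eq_zero_or_pos k with rfl | hk0
    · simp [P]
    · exact fun Y hY => hC.2.1.total hY (hpC k hk0 le_rfl)
  obtain ⟨T, hTC, hPT, hgap⟩ :=
    hC.2.1.exists_min_not_subset ((prefixFamily_finite hD.1.1).subset hC.1) hPcomp ⟨A, hAC, hAP⟩
  obtain ⟨q, hq, t, -, -, rfl⟩ := hC.1 hTC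
  set m := restrictPref p (q.take t).toFinset ++ q.drop t
  have hmD : m ∈ D := hD.restrictPref_append_drop_mem hp hq t
  have hmk : m.take k = p.take k := take_restrictPref_append (by omega) hPT.subset _
  have hmT := toFinset_take_restrictPref_append hpP.1
    (hpP.2 ▸ subset_of_mem_prefixFamily hD.1.1 (hC.1 hTC)) (q.drop t)
  have hkT : k < (q.take t).toFinset.card := by
    have hPk : P.card = k := card_toFinset_take hpP.1 (by omega)
    have := Finset.card_lt_card hPT
    omega
  refine ⟨m, hmD, fun j hj1 hjk => ?_⟩
  rcases hjk.lt_or_eq with hjk | rfl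
  · have hmj := congrArg (take j) hmk
    simp only [take_take, min_eq_left (Nat.lt_succ_iff.1 hjk)] at hmj
    exact hmj ▸ hpC j hj1 (Nat.lt_succ_iff.1 hjk)
  · have hmA := length_eq_card_of_mem_prefOn (hD.1.1 hmD)
    have hPU : P ⊆ (m.take (k + 1)).toFinset := by
      rw [show P = (m.take k).toFinset by rw [hmk]]
      exact toFinset_take_mono m k.le_succ
    have hUT : (m.take (k + 1)).toFinset ⊆ (q.take t).toFinset :=
      hmT ▸ toFinset_take_mono m hkT
    exact hC.mem_of_forall_comparable ⟨m, hmD, k + 1, by omega, by omega, rfl⟩ fun Y hY =>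
      (hgap Y hY).imp (fun h => h.trans hPU) hUT.trans

theorem IsMaximalASPD.exists_prefixSets_eq (hD : IsMaximalASPD A D) {C : Set (Finset α)}
    (hC : IsMaxChainIn (prefixFamily D) C) (hCne : C.Nonempty) :
    ∃ p ∈ D, prefixSets p = C := by
  have hprefixes :
      ∀ k ≤ A.card, ∃ p ∈ D, ∀ j, 1 ≤ j → j ≤ k → (p.take j).toFinset ∈ C := by
    intro k
    induction k with
    | zero =>
      obtain ⟨p, hp, -⟩ := hC.1 hCne.some_mem
      exact fun _ => ⟨p, hp, by omega⟩
    | succ k ih =>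
      intro hk
      obtain ⟨p, hp, hpC⟩ := ih (by omega)
      exact hD.exists_prefixes_mem_succ hC hp hk hpC
  obtain ⟨p, hp, hpC⟩ := hprefixes A.card le_rfl
  refine ⟨p, hp, (isMaxChainIn_prefixSets hD.1.1 hp).eq_of_subset hC.1 hC.2.1 ?_⟩
  rintro _ ⟨k, hk1, hkp, rfl⟩
  exact hpC k hk1 (length_eq_card_of_mem_prefOn (hD.1.1 hp) ▸ hkp)

end Domain

theorem first_rank_eq_chain_count_general (A : Finset α) (D : Set (List α))
    (hD : IsMaximalASPD A D) (a : α) :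
    {l | l ∈ D ∧ l.head? = some a}.ncard =
      {C : Set (Finset α) | IsMaxChainIn (prefixFamily D) C ∧
        ({a} : Finset α) ∈ C ∧ ∀ S ∈ C, ({a} : Finset α) ⊆ S}.ncard := by
  have hchains : {C : Set (Finset α) | IsMaxChainIn (prefixFamily D) C ∧
      ({a} : Finset α) ∈ C ∧ ∀ S ∈ C, ({a} : Finset α) ⊆ S} =
      prefixSets '' {l | l ∈ D ∧ l.head? = some a} := by
    ext C
    constructor
    · rintro ⟨hC, haC, -⟩
      obtain ⟨p, hp, rfl⟩ := hD.exists_prefixSets_eq hC ⟨_, haC⟩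
      exact ⟨p, ⟨hp, singleton_mem_prefixSets_iff.1 haC⟩, rfl⟩
    · rintro ⟨l, ⟨hl, hhead⟩, rfl⟩
      exact ⟨isMaxChainIn_prefixSets hD.1.1 hl, singleton_mem_prefixSets_iff.2 hhead,
        fun S hS => Finset.singleton_subset_iff.2 (mem_of_mem_prefixSets hhead hS)⟩
  rw [hchains, ((prefixSets_injOn A).mono fun l hl => hD.1.1 hl.1).ncard_image]

/-- The number of preferences of a maximal Arrow's single-peaked domain having
first-ranked alternative `a` equals the number of maximal chains of the
corresponding regular vine whose minimal element is `{a}`. -/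
theorem first_rank_eq_chain_count (A : Finset α) (D : Set (List α))
    (hD : IsMaximalASPD A D) (a : α) (ha : a ∈ A) :
    {l | l ∈ D ∧ l.head? = some a}.ncard =
      {C : Set (Finset α) | IsMaxChainIn (prefixFamily D) C ∧
        ({a} : Finset α) ∈ C ∧ ∀ S ∈ C, ({a} : Finset α) ⊆ S}.ncard :=
  first_rank_eq_chain_count_general A D hD a
end
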